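/- Let x₁,…,x_n be distinct complex numbers, P an invertible n × n complex matrix, and n_l ≥ n. Let V be the n × (n_l+1) matrix with entries V_{k,m} = xₖᵐ (0 ≤ m ≤ n_l), and set W = P·V. If Z_L and Z_H denote the submatrices of W obtained by deleting the last and the first column respectively, then Z_H = P · D · P⁻¹ · Z_L, where D = diag(x₁,…,x_n); consequently the eigenvalues of any matrix A satisfying A · Z_L = Z_H are exactly x₁,…,x_n whenever Z_L has full row rank. -/
import Mathlib


open Matrix

theorem esprit_eigenvalues {n nl : ℕ} (hnl : n ≤ nl)
    (x : Fin n → ℂ) (hx : Function.Injective x)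
    (P : Matrix (Fin n) (Fin n) ℂ) (hP : IsUnit P)
    (W : Matrix (Fin n) (Fin (nl + 1)) ℂ)
    (hW : W = P * Matrix.of fun (k : Fin n) (m : Fin (nl + 1)) => x k ^ (m : ℕ))
    (ZL ZH : Matrix (Fin n) (Fin nl) ℂ)
    (hZL : ZL = W.submatrix id Fin.castSucc)
    (hZH : ZH = W.submatrix id Fin.succ) :
    ZH = P * Matrix.diagonal x * P⁻¹ * ZL ∧
    ∀ A : Matrix (Fin n) (Fin n) ℂ, A * ZL = ZH → ZL.rank = n →
      spectrum ℂ A = Set.range x := by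
  set V : Matrix (Fin n) (Fin (nl + 1)) ℂ :=
    Matrix.of fun (k : Fin n) (m : Fin (nl + 1)) => x k ^ (m : ℕ) with hV
  have hPdet : IsUnit P.det := (Matrix.isUnit_iff_isUnit_det P).mp hP
  have hPinv' : P⁻¹ * P = 1 := Matrix.nonsing_inv_mul P hPdet
  have hsub : ∀ (M : Matrix (Fin n) (Fin n) ℂ) (f : Fin nl → Fin (nl + 1)),
      (M * V).submatrix id f = M * (V.submatrix id f) := by
    intro M f
    ext i j
    simp [Matrix.mul_apply, Matrix.submatrix]
  have hVstep : V.submatrix id Fin.succ =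
      Matrix.diagonal x * V.submatrix id Fin.castSucc := by
    ext i j
    simp only [Matrix.diagonal_mul, Matrix.submatrix_apply, id_eq, hV, Matrix.of_apply,
      Fin.val_succ, Fin.coe_castSucc]
    ring
  have hmain : ZH = P * Matrix.diagonal x * P⁻¹ * ZL := by
    rw [hZH, hZL, hW, hsub, hsub, hVstep, Matrix.mul_assoc (P * Matrix.diagonal x) P⁻¹,
      ← Matrix.mul_assoc P⁻¹ P, hPinv', Matrix.one_mul, ← Matrix.mul_assoc]
  refine ⟨hmain, ?_⟩
  intro A hA hrank
  -- ZL has full row rank, hence mulVecLin is surjective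
  have hsurj : Function.Surjective ZL.mulVecLin := by
    rw [← LinearMap.range_eq_top]
    apply Submodule.eq_top_of_finrank_eq
    rw [show Module.finrank ℂ (LinearMap.range ZL.mulVecLin) = ZL.rank from rfl, hrank]
    simp
  have hAeq : A = P * Matrix.diagonal x * P⁻¹ := by
    apply Matrix.toLin'.injective
    refine LinearMap.ext fun v => ?_
    obtain ⟨u, hu⟩ := hsurj v
    have h1 : A.mulVec v = (A * ZL).mulVec u := by
      rw [← hu, Matrix.mulVecLin_apply, Matrix.mulVec_mulVec]
    have h2 : (P * Matrix.diagonal x * P⁻¹).mulVec v =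
        (P * Matrix.diagonal x * P⁻¹ * ZL).mulVec u := by
      rw [← hu, Matrix.mulVecLin_apply, Matrix.mulVec_mulVec]
    rw [Matrix.toLin'_apply, Matrix.toLin'_apply, h1, h2, hA, hmain]
  rw [hAeq, ← hP.unit_spec, ← Matrix.coe_units_inv, spectrum.units_conjugate,
    spectrum_diagonal]
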